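/- Let (G, 𝒞) be a linear biased graph. Let C1, C2 be cycles whose common edges induce a nontrivial path P from u to v, with C1 = P1 ∪ P and C2 = P2 ∪ P. Let e1 ∈ E(P), and suppose T is a spanning tree with E(C1) \ {e1} ⊆ E(T) and E(P2) ∩ E(T) = ∅. If C(e,T) is balanced for all e ∈ E(P2), then C1 is balanced if and only if C2 is balanced. -/

import Mathlib

open Finset
open scoped symmDiff Classical

/-- A multigraph: each edge carries an unordered pair of endpoints. -/
structure Multigraph (V : Type*) (E : Type*) where
  ends : E → Sym2 V

namespace Multigraph

variable {V E : Type*} (G : Multigraph V E)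

/-- Edge `e` is incident with vertex `w`. -/
def Inc (e : E) (w : V) : Prop := w ∈ G.ends e

/-- `e` is a loop. -/
def IsLoopEdge (e : E) : Prop := (G.ends e).IsDiag

/-- Multiplicity of a vertex in an edge: `2` for a loop at the vertex, `1` if incident,
`0` otherwise. -/
noncomputable def mult (e : E) (w : V) : ℕ :=
  if G.ends e = Sym2.diag w then 2 else if w ∈ G.ends e then 1 else 0

/-- Degree of `w` with respect to the edge set `A` (loops counted twice). -/
noncomputable def deg (A : Finset E) (w : V) : ℕ := ∑ e ∈ A, G.mult e w

/-- Two edges of `A` sharing a vertex. -/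
def AdjIn (A : Finset E) (e f : E) : Prop :=
  e ∈ A ∧ f ∈ A ∧ ∃ w, G.Inc e w ∧ G.Inc f w

/-- The edge set `A` induces a connected subgraph. -/
def EdgeConnected (A : Finset E) : Prop :=
  ∀ e ∈ A, ∀ f ∈ A, Relation.ReflTransGen (G.AdjIn A) e f

/-- `A` is the edge set of a cycle: nonempty, connected, and every vertex has degree
`0` or `2` in `A`. -/
def IsCycle (A : Finset E) : Prop :=
  A.Nonempty ∧ G.EdgeConnected A ∧ ∀ w, G.deg A w = 0 ∨ G.deg A w = 2

/-- The set of vertices met by the edge set `A`. -/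
def Supp (A : Finset E) : Set V := { w | ∃ e ∈ A, G.Inc e w }

/-- `A` is the edge set of a path from `u` to `w`. -/
def IsPath (A : Finset E) (u w : V) : Prop :=
  u ≠ w ∧ G.EdgeConnected A ∧ G.deg A u = 1 ∧ G.deg A w = 1 ∧
    ∀ x, x ≠ u → x ≠ w → (G.deg A x = 0 ∨ G.deg A x = 2)

/-- Vertices joined by a walk using edges of `A`. -/
def Reach (A : Finset E) (a b : V) : Prop :=
  Relation.ReflTransGen (fun x y => ∃ e ∈ A, G.Inc e x ∧ G.Inc e y) a b

/-- `T` is a spanning tree: every pair of vertices is joined by `T` and `T` contains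
no cycle. -/
def IsSpanningTree (T : Finset E) : Prop :=
  (∀ a b : V, G.Reach T a b) ∧ ∀ C ⊆ T, ¬ G.IsCycle C

/-- `C` is the fundamental cycle of the edge `e` with respect to the spanning tree `T`. -/
def IsFundCycle (T : Finset E) (e : E) (C : Finset E) : Prop :=
  G.IsCycle C ∧ e ∈ C ∧ C ⊆ insert e T

end Multigraph

/-- Symmetric difference of a list of finsets. -/
def listSymmDiff {E : Type*} [DecidableEq E] (L : List (Finset E)) : Finset E :=
  L.foldr (· ∆ ·) ∅

/-- A linear biased graph: a multigraph together with a class `Bal` of *balanced* cycles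
satisfying the theta property and closed under taking cycles that are symmetric
differences of balanced cycles. -/
structure LinearBiasedGraph (V E : Type*) [DecidableEq E] where
  G : Multigraph V E
  Bal : Set (Finset E)
  bal_cycle : ∀ C ∈ Bal, G.IsCycle C
  theta : ∀ C₁ C₂ C₃ : Finset E, G.IsCycle C₁ → G.IsCycle C₂ → G.IsCycle C₃ →
    C₃ = C₁ ∆ C₂ → C₁ ∈ Bal → C₂ ∈ Bal → C₃ ∈ Bal
  linear : ∀ L : List (Finset E), (∀ D ∈ L, D ∈ Bal) →
    ∀ C : Finset E, G.IsCycle C → C = listSymmDiff L → C ∈ Bal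

namespace LinearBiasedGraph

variable {V E : Type*} [DecidableEq E] (Ω : LinearBiasedGraph V E)

/-- Independent sets of the frame matroid `M(Ω)`: edge sets containing no balanced cycle
and no two distinct cycles lying in a common component. -/
def FrameIndep (A : Finset E) : Prop :=
  (∀ C ⊆ A, Ω.G.IsCycle C → C ∉ Ω.Bal) ∧
  ∀ C₁ C₂ : Finset E, C₁ ⊆ A → C₂ ⊆ A → Ω.G.IsCycle C₁ → Ω.G.IsCycle C₂ → C₁ ≠ C₂ →
    ∀ e₁ ∈ C₁, ∀ e₂ ∈ C₂, ¬ Relation.ReflTransGen (Ω.G.AdjIn A) e₁ e₂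

/-- Bases of the frame matroid `M(Ω)`: maximal independent sets. -/
def FrameBase (B : Finset E) : Prop :=
  Ω.FrameIndep B ∧ ∀ A : Finset E, Ω.FrameIndep A → B ⊆ A → A = B

/-- Circuits of the frame matroid `M(Ω)`: minimal dependent sets. -/
def FrameCircuit (C : Finset E) : Prop :=
  ¬ Ω.FrameIndep C ∧ ∀ C' ⊂ C, Ω.FrameIndep C'

variable {κ : ℕ}

/-- A single symmetric exchange between two members of a sequence of bases. -/
def SymExchStep (𝓑 𝓑' : Fin κ → Finset E) : Prop :=
  ∃ i j : Fin κ, i ≠ j ∧ ∃ e ∈ 𝓑 i, ∃ f ∈ 𝓑 j,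
    Ω.FrameBase (insert f (𝓑 i \ {e})) ∧ Ω.FrameBase (insert e (𝓑 j \ {f})) ∧
    𝓑' i = insert f (𝓑 i \ {e}) ∧ 𝓑' j = insert e (𝓑 j \ {f}) ∧
    ∀ t : Fin κ, t ≠ i → t ≠ j → 𝓑' t = 𝓑 t

/-- `𝓑'` is obtained from `𝓑` by a finite sequence of symmetric exchanges. -/
def ExchReachable (𝓑 𝓑' : Fin κ → Finset E) : Prop :=
  Relation.ReflTransGen Ω.SymExchStep 𝓑 𝓑'

end LinearBiasedGraph

/-! ### Auxiliary lemmas -/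

namespace Multigraph

variable {V E : Type*} {G : Multigraph V E}

lemma mult_eq_add {e : E} {a b : V} (hab : G.ends e = s(a, b)) (hne : a ≠ b) (v : V) :
    G.mult e v = (if v = a then 1 else 0) + (if v = b then 1 else 0) := by
  have hd : ¬ G.ends e = Sym2.diag v := by
    rw [hab, Sym2.diag, Sym2.eq_iff]
    rintro (⟨h1, h2⟩ | ⟨h1, h2⟩) <;> exact hne (h1.trans h2.symm)
  rw [mult, if_neg hd, hab]
  by_cases h1 : v = a
  · subst h1
    simp [Sym2.mem_iff, hne]
  · by_cases h2 : v = b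
    · subst h2
      simp [Sym2.mem_iff, h1]
    · simp [Sym2.mem_iff, h1, h2]

lemma multZ {e : E} {a b : V} (hab : G.ends e = s(a, b)) (hne : a ≠ b) (v : V) :
    ((G.mult e v : ZMod 2)) = (if v = a then 1 else 0) + (if v = b then 1 else 0) := by
  rw [mult_eq_add hab hne v, Nat.cast_add]
  congr 1 <;> split_ifs <;> simp

lemma mult_diag {e : E} {a : V} (hab : G.ends e = Sym2.diag a) (v : V) :
    G.mult e v = if v = a then 2 else 0 := by
  rw [mult]
  by_cases h : v = a
  · subst h; rw [if_pos hab, if_pos rfl]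
  · rw [if_neg, if_neg, if_neg h]
    · rw [hab, Sym2.diag, Sym2.mem_iff]
      tauto
    · rw [hab]
      intro hh
      exact h (Sym2.diag_injective hh).symm

lemma deg_empty (v : V) : G.deg (∅ : Finset E) v = 0 := by simp [deg]

lemma deg_insert [DecidableEq E] {e : E} {A : Finset E} (he : e ∉ A) (v : V) :
    G.deg (insert e A) v = G.mult e v + G.deg A v := by
  rw [deg, Finset.sum_insert he, deg]

lemma even_cast_iff (n : ℕ) : (n : ZMod 2) = 0 ↔ Even n := by
  rw [ZMod.natCast_eq_zero_iff]
  exact even_iff_two_dvd.symm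

lemma isCycle_singleton_loop {e : E} (h : (G.ends e).IsDiag) : G.IsCycle {e} := by
  obtain ⟨a, ha⟩ := (⟨_, Sym2.diag_diagElem h⟩ : ∃ a, Sym2.diag a = G.ends e)
  refine ⟨⟨e, Finset.mem_singleton_self e⟩, ?_, ?_⟩
  · intro f hf g hg
    rw [Finset.mem_singleton] at hf hg
    subst hf; subst hg
    exact Relation.ReflTransGen.refl
  · intro v
    have h1 : G.deg {e} v = G.mult e v := by simp [deg]
    rw [h1, mult_diag ha.symm]
    split <;> simp

lemma deg_symmDiff [DecidableEq E] (A B : Finset E) (v : V) :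
    ((G.deg (A ∆ B) v : ZMod 2)) = (G.deg A v : ZMod 2) + (G.deg B v : ZMod 2) := by
  have hdis : Disjoint (A ∆ B) (A ∩ B) := by
    simpa using (disjoint_symmDiff_inf A B)
  have hun : (A ∆ B) ∪ (A ∩ B) = A ∪ B := by
    simpa using (symmDiff_sup_inf A B)
  have key : (∑ e ∈ A ∆ B, (G.mult e v : ZMod 2)) + ∑ e ∈ A ∩ B, (G.mult e v : ZMod 2)
      = ∑ e ∈ A ∪ B, (G.mult e v : ZMod 2) := by
    rw [← Finset.sum_union hdis, hun]
  have key2 : (∑ e ∈ A ∪ B, (G.mult e v : ZMod 2)) + ∑ e ∈ A ∩ B, (G.mult e v : ZMod 2)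
      = (∑ e ∈ A, (G.mult e v : ZMod 2)) + ∑ e ∈ B, (G.mult e v : ZMod 2) :=
    Finset.sum_union_inter
  have h3 : (∑ e ∈ A ∩ B, (G.mult e v : ZMod 2)) + ∑ e ∈ A ∩ B, (G.mult e v : ZMod 2) = 0 := by
    have : ∀ t : ZMod 2, t + t = 0 := by decide
    exact this _
  rw [deg, deg, deg, Nat.cast_sum, Nat.cast_sum, Nat.cast_sum]
  linear_combination key + key2 - h3

lemma reach_oddset [DecidableEq E] {S : Finset E} {x y : V} (h : G.Reach S x y) :
    ∃ A : Finset E, A ⊆ S ∧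
      ∀ v, (G.deg A v : ZMod 2) = (if v = x then 1 else 0) + (if v = y then 1 else 0) := by
  induction h with
  | refl =>
    refine ⟨∅, Finset.empty_subset _, fun v => ?_⟩
    rw [deg_empty]
    by_cases hv : v = x <;> simp [hv] <;> decide
  | @tail b c hxb hbc ih =>
    obtain ⟨A, hAS, hA⟩ := ih
    obtain ⟨e, heS, heb, hec⟩ := hbc
    by_cases hbceq : b = c
    · exact ⟨A, hAS, by rw [← hbceq]; exact hA⟩
    · have hends : G.ends e = s(b, c) := (Sym2.mem_and_mem_iff hbceq).mp ⟨heb, hec⟩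
      refine ⟨A ∆ {e}, ?_, fun v => ?_⟩
      · refine subset_trans ?_ (Finset.union_subset hAS (Finset.singleton_subset_iff.mpr heS))
        intro t ht
        have : A ∆ {e} ≤ A ⊔ {e} := symmDiff_le_sup
        exact this ht
      · rw [deg_symmDiff, hA v]
        have hsing : G.deg {e} v = G.mult e v := by simp [deg]
        rw [hsing, multZ hends hbceq v]
        have h2 : ∀ s t u : ZMod 2, (s + t) + (t + u) = s + u := by decide
        exact h2 _ _ _

/-- Path predicate: a list of (edge, next-vertex) steps starting at a vertex. -/
def PathOn (G : Multigraph V E) (A : Finset E) : V → List (E × V) → Prop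
  | _, [] => True
  | x, (e, y) :: L => e ∈ A ∧ G.ends e = s(x, y) ∧ G.PathOn A y L

variable {A : Finset E}

lemma pathOn_append : ∀ (L M : List (E × V)) (x : V), G.PathOn A x (L ++ M) → G.PathOn A x L
  | [], _, _, _ => trivial
  | (e, y) :: L, M, x, h => ⟨h.1, h.2.1, pathOn_append L M y h.2.2⟩

lemma pathOn_edges_mem : ∀ (L : List (E × V)) (x : V), G.PathOn A x L → ∀ p ∈ L, p.1 ∈ A
  | [], _, _, p, hp => absurd hp List.not_mem_nil
  | (e, y) :: L, x, h, p, hp => by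
    rcases List.mem_cons.mp hp with h1 | h1
    · subst h1; exact h.1
    · exact pathOn_edges_mem L y h.2.2 p h1

lemma pathOn_ends_mem : ∀ (L : List (E × V)) (x : V), G.PathOn A x L → ∀ p ∈ L, ∀ v ∈ G.ends p.1,
    v ∈ x :: L.map Prod.snd
  | [], _, _, p, hp, _, _ => absurd hp List.not_mem_nil
  | (e, y) :: L, x, h, p, hp, v, hv => by
    rcases List.mem_cons.mp hp with h1 | h1
    · subst h1
      rw [h.2.1, Sym2.mem_iff] at hv
      rcases hv with rfl | rfl
      · exact List.mem_cons_self
      · simp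
    · have hrec := pathOn_ends_mem L y h.2.2 p h1 v hv
      simp only [List.map_cons]
      exact List.mem_cons_of_mem _ (by simpa using hrec)

lemma pathOn_reflTransGen (C : Finset E) :
    ∀ (L : List (E × V)) (x : V) (f : E), G.PathOn A x L → (∀ p ∈ L, p.1 ∈ C) → f ∈ C →
      x ∈ G.ends f → ∀ p ∈ L, Relation.ReflTransGen (G.AdjIn C) f p.1
  | [], _, _, _, _, _, _, p, hp => absurd hp List.not_mem_nil
  | (e, y) :: L, x, f, h, hC, hf, hfx, p, hp => by
    have heC : e ∈ C := hC (e, y) (List.mem_cons_self)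
    have hstep : G.AdjIn C f e := by
      refine ⟨hf, heC, x, hfx, ?_⟩
      rw [Inc, h.2.1]
      exact Sym2.mem_mk_left x y
    rcases List.mem_cons.mp hp with h1 | h1
    · subst h1
      exact Relation.ReflTransGen.single hstep
    · refine (Relation.ReflTransGen.single hstep).trans
        (pathOn_reflTransGen C L y e h.2.2 (fun q hq => hC q (List.mem_cons_of_mem _ hq)) heC
          ?_ p h1)
      rw [h.2.1]
      exact Sym2.mem_mk_right x y

/-- Last vertex of a path. -/
def lastV (x : V) (L : List (E × V)) : V := (L.map Prod.snd).getLastD x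

lemma lastV_cons (x : V) (e : E) (y : V) (L : List (E × V)) :
    lastV x ((e, y) :: L) = lastV y L := by
  unfold lastV
  rw [List.map_cons, List.getLastD_cons]

lemma lastV_concat (x : V) (L : List (E × V)) (p : E × V) :
    lastV x (L ++ [p]) = p.2 := by
  unfold lastV
  rw [List.map_append, List.map_singleton]
  exact List.getLastD_concat

lemma pathOn_deg [DecidableEq E] :
    ∀ (L : List (E × V)) (x : V), G.PathOn A x L → (x :: L.map Prod.snd).Nodup →
      (L.map Prod.fst).Nodup → ∀ v : V,
      G.deg (L.map Prod.fst).toFinset v + (if v = x then 1 else 0)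
        + (if v = lastV x L then 1 else 0)
        = if v ∈ x :: L.map Prod.snd then 2 else 0
  | [], x, _, _, _, v => by
    have hl : lastV x ([] : List (E × V)) = x := rfl
    simp only [List.map_nil, List.toFinset_nil, deg_empty, hl]
    by_cases h : v = x <;> simp [h]
  | (e, y) :: L, x, h, hv, he, v => by
    obtain ⟨heA, hends, hL⟩ := h
    rw [List.map_cons] at hv
    have hxny : x ∉ (y :: L.map Prod.snd) := (List.nodup_cons.mp hv).1
    have hxy : x ≠ y := fun hh => hxny (hh ▸ List.mem_cons_self)
    have hv' : (y :: L.map Prod.snd).Nodup := (List.nodup_cons.mp hv).2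
    rw [List.map_cons] at he
    have heL : e ∉ L.map Prod.fst := (List.nodup_cons.mp he).1
    have he' : (L.map Prod.fst).Nodup := (List.nodup_cons.mp he).2
    have IH := pathOn_deg L y hL hv' he' v
    have hlast : lastV x ((e, y) :: L) = lastV y L := lastV_cons x e y L
    have hefin : (((e, y) :: L).map Prod.fst).toFinset = insert e (L.map Prod.fst).toFinset := by
      simp
    rw [hefin, deg_insert (by simpa using heL), mult_eq_add hends hxy, hlast]
    have hmem : (v ∈ x :: ((e, y) :: L).map Prod.snd) ↔ (v = x ∨ v ∈ y :: L.map Prod.snd) := by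
      simp
    by_cases h1 : v = x
    · subst h1
      rw [if_neg hxny] at IH
      rw [if_pos (hmem.mpr (Or.inl rfl)), if_pos rfl, if_neg hxy]
      split_ifs at IH ⊢ <;> omega
    · rw [if_neg h1]
      have hmem2 : (v ∈ x :: ((e, y) :: L).map Prod.snd) ↔ (v ∈ y :: L.map Prod.snd) := by
        rw [hmem]
        simp [h1]
      by_cases h2 : v ∈ y :: L.map Prod.snd
      · rw [if_pos (hmem2.mpr h2), if_pos h2] at *
        split_ifs at IH ⊢ <;> omega
      · rw [if_neg (fun hh => h2 (hmem2.mp hh))]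
        rw [if_neg h2] at IH
        split_ifs at IH ⊢ <;> omega

lemma exists_cycle_subset [DecidableEq E] (A : Finset E) (hne : A.Nonempty)
    (heven : ∀ v, Even (G.deg A v)) : ∃ C ⊆ A, G.IsCycle C := by
  by_cases hloop : ∃ e ∈ A, (G.ends e).IsDiag
  · obtain ⟨e, heA, hd⟩ := hloop
    exact ⟨{e}, Finset.singleton_subset_iff.mpr heA, isCycle_singleton_loop hd⟩
  push_neg at hloop
  set Q : ℕ → Prop := fun n => ∃ (x : V) (L : List (E × V)), G.PathOn A x L ∧
    (x :: L.map Prod.snd).Nodup ∧ (L.map Prod.fst).Nodup ∧ L.length = n with hQdef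
  have hbound : ∀ n, Q n → n ≤ A.card := by
    rintro n ⟨x, L, hL, _, hnd, rfl⟩
    have hsub : (L.map Prod.fst).toFinset ⊆ A := by
      intro a ha
      rw [List.mem_toFinset, List.mem_map] at ha
      obtain ⟨p, hp, rfl⟩ := ha
      exact pathOn_edges_mem L x hL p hp
    calc L.length = (L.map Prod.fst).length := (List.length_map _).symm
      _ = (L.map Prod.fst).toFinset.card := (List.toFinset_card_of_nodup hnd).symm
      _ ≤ A.card := Finset.card_le_card hsub
  have hQ1 : Q 1 := by
    obtain ⟨e, heA⟩ := hne
    obtain ⟨a, b, hab⟩ : ∃ a b, G.ends e = s(a, b) :=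
      Sym2.inductionOn (f := fun z => ∃ a b, z = s(a, b)) (G.ends e) (fun a b => ⟨a, b, rfl⟩)
    have hne' : a ≠ b := by
      intro hh
      exact hloop e heA (by rw [hab, hh]; exact Sym2.mk_isDiag_iff.mpr rfl)
    exact ⟨a, [(e, b)], ⟨heA, hab, trivial⟩, by simp [hne'], by simp, rfl⟩
  have hQn : Q (Nat.findGreatest Q A.card) := Nat.findGreatest_spec (hbound 1 hQ1) hQ1
  have hmax : ∀ m, Q m → m ≤ Nat.findGreatest Q A.card :=
    fun m hm => Nat.le_findGreatest (hbound m hm) hm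
  have hn1 : 1 ≤ Nat.findGreatest Q A.card := hmax 1 hQ1
  obtain ⟨x, L, hLfull, hvnd, hend, hlen⟩ := hQn
  cases hLcases : L with
  | nil => rw [hLcases] at hlen; simp at hlen; omega
  | cons p L' =>
  obtain ⟨e₁, x₁⟩ := p
  subst hLcases
  obtain ⟨he₁A, hends₁, hL'⟩ := hLfull
  have hLfull : G.PathOn A x ((e₁, x₁) :: L') := ⟨he₁A, hends₁, hL'⟩
  have hx_notin : x ∉ (x₁ :: L'.map Prod.snd) := by
    rw [List.map_cons] at hvnd
    exact (List.nodup_cons.mp hvnd).1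
  have hmult : ∀ e ∈ A, G.mult e x = if x ∈ G.ends e then 1 else 0 := by
    intro e heA
    rw [mult, if_neg]
    intro hd
    exact hloop e heA (hd ▸ Sym2.diag_isDiag x)
  have hdegx : G.deg A x = (A.filter (fun e => x ∈ G.ends e)).card := by
    rw [Finset.card_filter, deg]
    exact Finset.sum_congr rfl hmult
  have hx_e₁ : x ∈ G.ends e₁ := by rw [hends₁]; exact Sym2.mem_mk_left x x₁
  have hdeg1 : 1 ≤ (A.filter (fun e => x ∈ G.ends e)).card := by
    exact Finset.card_pos.mpr ⟨e₁, Finset.mem_filter.mpr ⟨he₁A, hx_e₁⟩⟩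
  have hdeg2 : 1 < (A.filter (fun e => x ∈ G.ends e)).card := by
    have hevx := heven x
    rw [hdegx] at hevx
    rcases hevx with ⟨k, hk⟩
    omega
  obtain ⟨e', he'filt, he'ne⟩ := Finset.exists_mem_ne hdeg2 e₁
  obtain ⟨he'A, hx_e'⟩ := Finset.mem_filter.mp he'filt
  obtain ⟨y', hy'⟩ := Sym2.mem_iff_exists.mp hx_e'
  have hy'x : y' ≠ x := by
    intro hh
    exact hloop e' he'A (by rw [hy', hh]; exact Sym2.mk_isDiag_iff.mpr rfl)
  have he'L : e' ∉ ((e₁, x₁) :: L').map Prod.fst := by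
    intro hmem
    rw [List.mem_map] at hmem
    obtain ⟨p, hp, hpe⟩ := hmem
    rcases List.mem_cons.mp hp with h1 | h1
    · exact he'ne (by rw [← hpe, h1])
    · have := pathOn_ends_mem L' x₁ hL' p h1 x (by rw [hpe]; exact hx_e')
      exact hx_notin (by simpa using this)
  by_cases hy'mem : y' ∈ x :: ((e₁, x₁) :: L').map Prod.snd
  · -- close a cycle
    have hy'tail : y' ∈ ((e₁, x₁) :: L').map Prod.snd := by
      rcases List.mem_cons.mp hy'mem with h | h
      · exact absurd h hy'x
      · exact h
    rw [List.mem_map] at hy'tail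
    obtain ⟨p, hpL, hp2⟩ := hy'tail
    obtain ⟨L₁, L₂, hsplit⟩ := List.append_of_mem hpL
    have hLeq : (e₁, x₁) :: L' = (L₁ ++ [p]) ++ L₂ := by rw [hsplit]; simp
    have hsubLc : (L₁ ++ [p]).Sublist ((e₁, x₁) :: L') := by
      rw [hLeq]
      exact List.sublist_append_left _ _
    have hLc_path : G.PathOn A x (L₁ ++ [p]) :=
      pathOn_append (L₁ ++ [p]) L₂ x (by rw [← hLeq]; exact hLfull)
    have hsubv : (x :: (L₁ ++ [p]).map Prod.snd).Sublist (x :: ((e₁, x₁) :: L').map Prod.snd) :=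
      (hsubLc.map Prod.snd).cons₂ x
    have hvndc : (x :: (L₁ ++ [p]).map Prod.snd).Nodup := hvnd.sublist hsubv
    have hsube : ((L₁ ++ [p]).map Prod.fst).Sublist (((e₁, x₁) :: L').map Prod.fst) :=
      hsubLc.map Prod.fst
    have hendc : ((L₁ ++ [p]).map Prod.fst).Nodup := hend.sublist hsube
    have he'Lc : e' ∉ (L₁ ++ [p]).map Prod.fst := fun hh => he'L (hsube.subset hh)
    have hlastc : lastV x (L₁ ++ [p]) = y' := by rw [lastV_concat, hp2]
    refine ⟨insert e' ((L₁ ++ [p]).map Prod.fst).toFinset, ?_, ?_, ?_, ?_⟩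
    · refine Finset.insert_subset he'A ?_
      intro a ha
      rw [List.mem_toFinset, List.mem_map] at ha
      obtain ⟨q, hq, rfl⟩ := ha
      exact pathOn_edges_mem (L₁ ++ [p]) x hLc_path q hq
    · exact ⟨e', Finset.mem_insert_self _ _⟩
    · intro g hg f hf
      have hsubC : ∀ q ∈ L₁ ++ [p], q.1 ∈ insert e' ((L₁ ++ [p]).map Prod.fst).toFinset := fun q hq =>
        Finset.mem_insert_of_mem (by rw [List.mem_toFinset, List.mem_map]; exact ⟨q, hq, rfl⟩)
      have hreach : ∀ g ∈ insert e' ((L₁ ++ [p]).map Prod.fst).toFinset,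
          Relation.ReflTransGen (G.AdjIn (insert e' ((L₁ ++ [p]).map Prod.fst).toFinset)) e' g := by
        intro g hg
        rcases Finset.mem_insert.mp hg with rfl | hg'
        · exact Relation.ReflTransGen.refl
        · rw [List.mem_toFinset, List.mem_map] at hg'
          obtain ⟨q, hq, rfl⟩ := hg'
          exact pathOn_reflTransGen _ (L₁ ++ [p]) x e' hLc_path hsubC (Finset.mem_insert_self _ _)
            hx_e' q hq
      have hsymm : Symmetric (G.AdjIn (insert e' ((L₁ ++ [p]).map Prod.fst).toFinset)) := by
        rintro a b ⟨h1, h2, w, hw1, hw2⟩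
        exact ⟨h2, h1, w, hw2, hw1⟩
      exact (haveI : Std.Symm (G.AdjIn (insert e' ((L₁ ++ [p]).map Prod.fst).toFinset)) := ⟨fun a b h => hsymm h⟩; Std.Symm.symm _ _ (hreach g hg)).trans (hreach f hf)
    · intro v
      have hF3 := pathOn_deg (L₁ ++ [p]) x hLc_path hvndc hendc v
      rw [hlastc] at hF3
      have hdC : G.deg (insert e' ((L₁ ++ [p]).map Prod.fst).toFinset) v
          = G.mult e' v + G.deg ((L₁ ++ [p]).map Prod.fst).toFinset v :=
        deg_insert (fun hh => he'Lc (List.mem_toFinset.mp hh)) v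
      rw [hdC, mult_eq_add hy' (Ne.symm hy'x)]
      split_ifs at hF3 ⊢ <;> omega
  · -- extend the path: contradiction with maximality
    exfalso
    have hQn1 : Q (Nat.findGreatest Q A.card + 1) := by
      refine ⟨y', (e', x) :: (e₁, x₁) :: L', ⟨he'A, ?_, hLfull⟩, ?_, ?_, ?_⟩
      · rw [hy']; exact Sym2.eq_swap
      · rw [List.map_cons]
        exact List.nodup_cons.mpr ⟨hy'mem, hvnd⟩
      · rw [List.map_cons]
        exact List.nodup_cons.mpr ⟨he'L, hend⟩
      · simp only [List.length_cons] at hlen ⊢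
        omega
    have := hmax _ hQn1
    omega

lemma exists_fundCycle {T : Finset E} (hT : G.IsSpanningTree T) {e : E}
    (he : e ∉ T) : ∃ C, G.IsFundCycle T e C := by
  obtain ⟨a, b, hab⟩ : ∃ a b, G.ends e = s(a, b) :=
    Sym2.inductionOn (f := fun z => ∃ a b, z = s(a, b)) (G.ends e) (fun a b => ⟨a, b, rfl⟩)
  by_cases hd : a = b
  · refine ⟨{e}, isCycle_singleton_loop (by rw [hab, hd]; exact Sym2.mk_isDiag_iff.mpr rfl),
      Finset.mem_singleton_self e, ?_⟩
    intro t ht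
    rw [Finset.mem_singleton] at ht
    subst ht
    exact Finset.mem_insert_self _ _
  · obtain ⟨P, hPT, hPdeg⟩ := reach_oddset (hT.1 a b)
    have heP : e ∉ P := fun hh => he (hPT hh)
    have hins : ∀ v, Even (G.deg (insert e P) v) := by
      intro v
      rw [← even_cast_iff, deg_insert heP, Nat.cast_add, hPdeg v, multZ hab hd v]
      have : ∀ s t : ZMod 2, s + t + (s + t) = 0 := by decide
      rw [add_comm]
      exact this _ _
    obtain ⟨C, hCsub, hCcyc⟩ := exists_cycle_subset (insert e P)
      ⟨e, Finset.mem_insert_self _ _⟩ hins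
    have heC : e ∈ C := by
      by_contra heC
      have hCT : C ⊆ T := by
        intro t ht
        rcases Finset.mem_insert.mp (hCsub ht) with rfl | htP
        · exact absurd ht heC
        · exact hPT htP
      exact hT.2 C hCT hCcyc
    refine ⟨C, hCcyc, heC, ?_⟩
    intro t ht
    rcases Finset.mem_insert.mp (hCsub ht) with rfl | htP
    · exact Finset.mem_insert_self _ _
    · exact Finset.mem_insert_of_mem (hPT htP)

lemma fundCycle_cases {T C : Finset E} {e : E} (h : G.IsFundCycle T e C) :
    ∀ f ∈ C, f ∉ T → f = e := by
  intro f hf hfT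
  rcases Finset.mem_insert.mp (h.2.2 hf) with h1 | h1
  · exact h1
  · exact absurd h1 hfT

lemma isCycle_even {C : Finset E} (h : G.IsCycle C) (v : V) : (G.deg C v : ZMod 2) = 0 := by
  rcases h.2.2 v with h1 | h1 <;> rw [h1] <;> decide

end Multigraph

section ListSymmDiffLemmas

variable {E : Type*} [DecidableEq E]

lemma listSymmDiff_cons (C : Finset E) (L : List (Finset E)) :
    listSymmDiff (C :: L) = C ∆ listSymmDiff L := rfl

lemma deg_listSymmDiff {V : Type*} {G : Multigraph V E} :
    ∀ (L : List (Finset E)), (∀ D ∈ L, ∀ v, (G.deg D v : ZMod 2) = 0) →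
      ∀ v, (G.deg (listSymmDiff L) v : ZMod 2) = 0
  | [], _, v => by
    have : listSymmDiff ([] : List (Finset E)) = ∅ := rfl
    rw [this, Multigraph.deg_empty]
    rfl
  | C :: L, h, v => by
    rw [listSymmDiff_cons, Multigraph.deg_symmDiff, h C (List.mem_cons_self) v,
      deg_listSymmDiff L (fun D hD => h D (List.mem_cons_of_mem _ hD)) v, add_zero]

lemma mem_listSymmDiff_map {T : Finset E} (FC : E → Finset E) :
    ∀ (l : List E), l.Nodup → (∀ e ∈ l, e ∈ FC e ∧ ∀ f ∈ FC e, f ∉ T → f = e) →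
      ∀ f, f ∉ T → (f ∈ listSymmDiff (l.map FC) ↔ f ∈ l) := by
  intro l
  induction l with
  | nil => intro _ _ f _; simp [listSymmDiff]
  | cons e l ih =>
    intro hnd hprop f hf
    rw [List.map_cons, listSymmDiff_cons, Finset.mem_symmDiff]
    have hFCe : f ∈ FC e ↔ f = e := by
      constructor
      · intro hh
        exact (hprop e (List.mem_cons_self)).2 f hh hf
      · intro hh
        rw [hh]
        exact (hprop e (List.mem_cons_self)).1
    have ih' := ih (List.nodup_cons.mp hnd).2 (fun a ha => hprop a (List.mem_cons_of_mem _ ha))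
      f hf
    by_cases hfe : f = e
    · subst hfe
      simp [hFCe, ih', (List.nodup_cons.mp hnd).1]
    · simp [hFCe, hfe, ih', List.mem_cons]

end ListSymmDiffLemmas
/-- Let `(G, 𝒞)` be a linear biased graph, `C₁, C₂` cycles whose common edges induce a
nontrivial path `P` from `u` to `w`, with `C₁ = P₁ ∪ P` and `C₂ = P₂ ∪ P`.  Let
`e₁ ∈ E(P)` and suppose `T` is a spanning tree with `E(C₁) \ {e₁} ⊆ E(T)` and
`E(P₂) ∩ E(T) = ∅`.  If `C(e,T)` is balanced for all `e ∈ E(P₂)`, then `C₁` is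
balanced iff `C₂` is balanced. -/
theorem balanced_iff_balanced {V E : Type*} [DecidableEq E]
    (Ω : LinearBiasedGraph V E) (C₁ C₂ P P₁ P₂ T : Finset E) (u w : V) (e₁ : E)
    (hC₁ : Ω.G.IsCycle C₁) (hC₂ : Ω.G.IsCycle C₂)
    (hP : C₁ ∩ C₂ = P) (hPpath : Ω.G.IsPath P u w) (hPne : P.Nonempty)
    (hdec₁ : C₁ = P₁ ∪ P) (hdec₂ : C₂ = P₂ ∪ P)
    (hP₁ : Ω.G.IsPath P₁ u w) (hP₂ : Ω.G.IsPath P₂ u w)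
    (he₁ : e₁ ∈ P)
    (hT : Ω.G.IsSpanningTree T) (hC₁T : C₁ \ {e₁} ⊆ T) (hP₂T : ∀ e ∈ P₂, e ∉ T)
    (hfund : ∀ e ∈ P₂, ∀ C : Finset E, Ω.G.IsFundCycle T e C → C ∈ Ω.Bal) :
    (C₁ ∈ Ω.Bal ↔ C₂ ∈ Ω.Bal) := by
  classical
  set C₃ : Finset E := C₁ ∆ C₂ with hC₃
  have hC₃P₂ : ∀ f ∈ C₃, f ∉ T → f ∈ P₂ := by
    intro f hf hfT
    rcases Finset.mem_symmDiff.mp hf with ⟨hf1, hf2⟩ | ⟨hf2, hf1⟩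
    · exfalso
      have hfe : f = e₁ := by
        by_contra hne
        exact hfT (hC₁T (Finset.mem_sdiff.mpr ⟨hf1, by simpa using hne⟩))
      exact hf2 (hfe ▸ (Finset.mem_inter.mp (hP.symm ▸ he₁)).2)
    · rw [hdec₂] at hf2
      rcases Finset.mem_union.mp hf2 with h | h
      · exact h
      · exact absurd (Finset.mem_inter.mp (hP.symm ▸ h)).1 hf1
  have hex : ∀ f ∈ C₃ \ T, ∃ C, Ω.G.IsFundCycle T f C := by
    intro f hf
    exact Multigraph.exists_fundCycle hT (Finset.mem_sdiff.mp hf).2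
  set FC : E → Finset E := fun f => if h : ∃ C, Ω.G.IsFundCycle T f C then h.choose else ∅
    with hFCdef
  have hFC : ∀ f ∈ C₃ \ T, Ω.G.IsFundCycle T f (FC f) := by
    intro f hf
    have h := hex f hf
    simp only [hFCdef, dif_pos h]
    exact h.choose_spec
  set l : List E := (C₃ \ T).toList with hl
  have hlnd : l.Nodup := Finset.nodup_toList _
  have hlmem : ∀ f, f ∈ l ↔ f ∈ C₃ \ T := fun f => Finset.mem_toList
  set Ls : List (Finset E) := l.map FC with hLs
  have hLsBal : ∀ D ∈ Ls, D ∈ Ω.Bal := by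
    intro D hD
    rw [hLs, List.mem_map] at hD
    obtain ⟨f, hfl, rfl⟩ := hD
    have hf := (hlmem f).mp hfl
    exact hfund f (hC₃P₂ f (Finset.mem_sdiff.mp hf).1 (Finset.mem_sdiff.mp hf).2) _ (hFC f hf)
  have hkey : listSymmDiff Ls = C₃ := by
    have hD : ∀ v, (Ω.G.deg (C₃ ∆ listSymmDiff Ls) v : ZMod 2) = 0 := by
      intro v
      rw [Multigraph.deg_symmDiff]
      have h1 : (Ω.G.deg C₃ v : ZMod 2) = 0 := by
        rw [hC₃, Multigraph.deg_symmDiff, Multigraph.isCycle_even hC₁,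
          Multigraph.isCycle_even hC₂, add_zero]
      have h2 : (Ω.G.deg (listSymmDiff Ls) v : ZMod 2) = 0 := by
        refine deg_listSymmDiff Ls (fun D hD v' => ?_) v
        exact Multigraph.isCycle_even (Ω.bal_cycle D (hLsBal D hD)) v'
      rw [h1, h2, add_zero]
    have hmemLs : ∀ f, f ∉ T → (f ∈ listSymmDiff Ls ↔ f ∈ l) := by
      refine mem_listSymmDiff_map FC l hlnd ?_
      intro a helm
      have hf := hFC a ((hlmem a).mp helm)
      exact ⟨hf.2.1, fun g hg hgT => Multigraph.fundCycle_cases hf g hg hgT⟩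
    have hDT : C₃ ∆ listSymmDiff Ls ⊆ T := by
      intro f hf
      by_contra hfT
      have hiff : f ∈ listSymmDiff Ls ↔ f ∈ C₃ := by
        rw [hmemLs f hfT, hlmem f, Finset.mem_sdiff]
        exact ⟨fun h => h.1, fun h => ⟨h, hfT⟩⟩
      rcases Finset.mem_symmDiff.mp hf with ⟨h1, h2⟩ | ⟨h1, h2⟩
      · exact h2 (hiff.mpr h1)
      · exact h2 (hiff.mp h1)
    have hempty : C₃ ∆ listSymmDiff Ls = ∅ := by
      by_contra hne'
      obtain ⟨C, hCsub, hCcyc⟩ := Multigraph.exists_cycle_subset (C₃ ∆ listSymmDiff Ls)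
        (Finset.nonempty_of_ne_empty hne')
        (fun v => (Multigraph.even_cast_iff _).mp (hD v))
      exact hT.2 C (hCsub.trans hDT) hCcyc
    have := symmDiff_eq_bot.mp (by simpa using hempty)
    exact this.symm
  have hC₂eq : C₂ = listSymmDiff (C₁ :: Ls) := by
    rw [listSymmDiff_cons, hkey, hC₃]
    exact (symmDiff_symmDiff_cancel_left C₁ C₂).symm
  have hC₁eq : C₁ = listSymmDiff (C₂ :: Ls) := by
    rw [listSymmDiff_cons, hkey, hC₃, symmDiff_comm C₁ C₂]
    exact (symmDiff_symmDiff_cancel_left C₂ C₁).symm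
  constructor
  · intro h1
    refine Ω.linear (C₁ :: Ls) ?_ C₂ hC₂ hC₂eq
    intro D hD
    rcases List.mem_cons.mp hD with rfl | hD'
    · exact h1
    · exact hLsBal D hD'
  · intro h2
    refine Ω.linear (C₂ :: Ls) ?_ C₁ hC₁ hC₁eq
    intro D hD
    rcases List.mem_cons.mp hD with rfl | hD'
    · exact h2
    · exact hLsBal D hD'
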